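/- arXiv:1701.03693 — 3 statements merged into one kernel-verified Lean document; each statement's English description precedes it below -/
import Mathlib

section
/- Let d ≥ 2 be an integer and let n_1, …, n_h be positive reals with n = Σ_{k=1}^h n_k. If n / n_k ≥ e^{d−3} for every k ∈ {1, …, h}, then Σ_{k=1}^h (n_k / n) · (log₂(n / n_k))^{d−2} ≤ (log₂ h)^{d−2}. -/
open Real

lemma log_pow_concave (m : ℕ) (hm : 1 ≤ m) :
    ConcaveOn ℝ (Set.Ici (Real.exp ((m : ℝ) - 1))) (fun x => Real.log x ^ m) := by
  set a := Real.exp ((m : ℝ) - 1) with ha_def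
  have ha : 0 < a := Real.exp_pos _
  have hint : interior (Set.Ici a) = Set.Ioi a := interior_Ici
  apply concaveOn_of_hasDerivWithinAt2_nonpos (convex_Ici a)
    (f' := fun x => (m : ℝ) * Real.log x ^ (m - 1) * x⁻¹)
    (f'' := fun x => ((m : ℝ) * (((m - 1 : ℕ) : ℝ) * Real.log x ^ (m - 1 - 1) * x⁻¹)) * x⁻¹ +
      ((m : ℝ) * Real.log x ^ (m - 1)) * (-(x ^ 2)⁻¹))
  · exact (Real.continuousOn_log.mono fun x hx =>
      (ne_of_gt (lt_of_lt_of_le ha hx))).pow m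
  · intro x hx
    rw [hint] at hx
    have hx0 : 0 < x := lt_trans ha hx
    exact ((Real.hasDerivAt_log hx0.ne').pow m).hasDerivWithinAt
  · intro x hx
    rw [hint] at hx
    have hx0 : 0 < x := lt_trans ha hx
    exact ((((Real.hasDerivAt_log hx0.ne').pow (m - 1)).const_mul (m : ℝ)).mul
      (hasDerivAt_inv hx0.ne')).hasDerivWithinAt
  · intro x hx
    rw [hint] at hx
    have hx0 : 0 < x := lt_trans ha hx
    set L := Real.log x with hL
    have hLgt : (m : ℝ) - 1 < L := by
      rw [hL, ← Real.log_exp ((m : ℝ) - 1)]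
      exact Real.log_lt_log ha hx
    have hL0 : 0 ≤ L := by
      have : (0 : ℝ) ≤ (m : ℝ) - 1 := by
        have : (1 : ℝ) ≤ (m : ℝ) := by exact_mod_cast hm
        linarith
      linarith
    have key : ((m - 1 : ℕ) : ℝ) * L ^ (m - 1 - 1) ≤ L ^ (m - 1) := by
      rcases eq_or_lt_of_le hm with h1 | h2
      · simp [← h1]
      · have h2' : 2 ≤ m := h2
        have hk : m - 1 = (m - 1 - 1) + 1 := by omega
        have hcast : ((m - 1 : ℕ) : ℝ) ≤ L := by
          have : ((m - 1 : ℕ) : ℝ) = (m : ℝ) - 1 := by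
            push_cast [Nat.cast_sub (by omega : 1 ≤ m)]; ring
          linarith
        calc ((m - 1 : ℕ) : ℝ) * L ^ (m - 1 - 1)
            ≤ L * L ^ (m - 1 - 1) :=
              mul_le_mul_of_nonneg_right hcast (pow_nonneg hL0 _)
          _ = L ^ (m - 1) := by rw [← pow_succ', ← hk]
    have hx2 : (x ^ 2)⁻¹ = x⁻¹ * x⁻¹ := by rw [sq, mul_inv]
    rw [hx2]
    have hfac : (0 : ℝ) ≤ (m : ℝ) * (x⁻¹ * x⁻¹) := by positivity
    nlinarith [mul_le_mul_of_nonneg_left key hfac]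

/-- Entropy comparison: if `n = ∑ n_k` with `n_k > 0` and `n / n_k ≥ e^(d-3)` for all `k`,
then `∑ (n_k/n) * (log₂ (n/n_k))^(d-2) ≤ (log₂ h)^(d-2)`. -/
theorem entropy_le_log_pow (d : ℕ) (hd : 2 ≤ d) (h : ℕ) (hh : 1 ≤ h)
    (nk : Fin h → ℝ) (hnk : ∀ k, 0 < nk k) (n : ℝ) (hn : n = ∑ k, nk k)
    (hbig : ∀ k, Real.exp ((d : ℝ) - 3) ≤ n / nk k) :
    ∑ k, (nk k / n) * (Real.logb 2 (n / nk k)) ^ (d - 2) ≤ (Real.logb 2 h) ^ (d - 2) := by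
  have hne : Nonempty (Fin h) := ⟨⟨0, hh⟩⟩
  have hn0 : 0 < n := by
    rw [hn]; exact Finset.sum_pos (fun k _ => hnk k) Finset.univ_nonempty
  set m := d - 2 with hm_def
  have hwsum : ∑ k, nk k / n = 1 := by
    rw [← Finset.sum_div, ← hn, div_self hn0.ne']
  rcases Nat.eq_zero_or_pos m with hm0 | hm1
  · simp only [hm0, pow_zero, mul_one]
    exact le_of_eq hwsum
  · have hcast : ((m : ℝ) - 1) = (d : ℝ) - 3 := by
      have : ((m : ℕ) : ℝ) = (d : ℝ) - 2 := by
        rw [hm_def]; push_cast [Nat.cast_sub hd]; ring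
      linarith
    have hconc := log_pow_concave m hm1
    have hmem : ∀ k : Fin h, n / nk k ∈ Set.Ici (Real.exp ((m : ℝ) - 1)) := by
      intro k; rw [Set.mem_Ici, hcast]; exact hbig k
    have hjensen := hconc.le_map_sum (t := Finset.univ) (w := fun k => nk k / n)
      (p := fun k => n / nk k)
      (fun k _ => div_nonneg (hnk k).le hn0.le) hwsum (fun k _ => hmem k)
    simp only [smul_eq_mul] at hjensen
    have hpsum : ∑ k, (nk k / n) * (n / nk k) = (h : ℝ) := by
      have h1 : ∀ k : Fin h, (nk k / n) * (n / nk k) = 1 := by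
        intro k
        rw [div_mul_div_comm, mul_comm, div_self
          (mul_ne_zero hn0.ne' (hnk k).ne')]
      simp [h1]
    rw [hpsum] at hjensen
    have hc : (0 : ℝ) < Real.log 2 ^ m := pow_pos (Real.log_pos one_lt_two) m
    have hrw : ∀ x : ℝ, Real.logb 2 x ^ m = Real.log x ^ m / Real.log 2 ^ m := by
      intro x; rw [Real.logb, div_pow]
    calc ∑ k, (nk k / n) * Real.logb 2 (n / nk k) ^ m
        = (∑ k, (nk k / n) * Real.log (n / nk k) ^ m) / Real.log 2 ^ m := by
          rw [Finset.sum_div]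
          refine Finset.sum_congr rfl fun k _ => ?_
          rw [hrw, mul_div_assoc]
      _ ≤ Real.log (h : ℝ) ^ m / Real.log 2 ^ m := by
          gcongr
      _ = Real.logb 2 h ^ m := (hrw _).symm
end

section
/- (Partition lemma, part i.) For every integer d ≥ 1 there exists a constant C > 0, depending only on d, with the following property. Let S be a finite set of n points of ℝ^d and let r be an integer with 1 ≤ r ≤ n. Then there exists a partition Π of S into at most r pairwise disjoint subsets, each of cardinality at most ⌈n/r⌉, such that for every axis-aligned box B ⊆ ℝ^d, the number of subsets P ∈ Π that partially intersect B (i.e., P ∩ B ≠ ∅ but P ⊄ B) is at most C · r^{1 − 1/d}. -/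
/-!
Build a `k`-d tree of fan-out `t = ⌈r^(1/d)⌉` with `d` levels, one per coordinate: at each
level, sort the current points along that level's coordinate and cut them into `t` consecutive
blocks, of `m·t^(d-1)` points at the top level, `m·t^(d-2)` at the next, and so on, where
`m = ⌈n/r⌉`; the nonempty leaves are the parts. A part that meets a box without lying inside it
has points on both sides of one of the `2d` facet hyperplanes, say `x_i = c`. Of the `t` blocks
cut along coordinate `i`, which are ordered along it, only one can contain such parts, while at
the other levels all `t` blocks may; hence at most `t^(d-1) ≤ 2^(d-1) r^(1-1/d)` parts straddle
each hyperplane.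
-/

namespace List

variable {α : Type*}

theorem sum_le_of_pairwise_eq_zero_or {l : List ℕ} {N : ℕ} (hle : ∀ x ∈ l, x ≤ N)
    (hzero : l.Pairwise fun a b => a = 0 ∨ b = 0) : l.sum ≤ N := by
  induction l with
  | nil => simp
  | cons a l ih =>
    rw [pairwise_cons] at hzero
    rw [sum_cons]
    by_cases ha : a = 0
    · simpa [ha] using ih (fun x hx => hle x (mem_cons_of_mem a hx)) hzero.2
    · have hl : l.sum = 0 := sum_eq_zero fun x hx => (hzero.1 x hx).resolve_left ha
      simpa [hl] using hle a mem_cons_self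

/-- Blocks are filled greedily: all of them but the last nonempty one hold `m * u` points. -/
theorem sum_map_splitLengths_replicate_le {g : List α → ℕ} {m u : ℕ}
    (hg : ∀ c q, c.length ≤ m * q → g c ≤ q) (t : ℕ) {l : List α} {q : ℕ}
    (hl : l.length ≤ m * q) : (((replicate t (m * u)).splitLengths l).map g).sum ≤ q := by
  induction t generalizing l q with
  | zero => simp
  | succ t ih =>
    simp only [replicate_succ, splitLengths_cons, map_cons, sum_cons]
    by_cases hshort : l.length ≤ m * u
    · rw [take_of_length_le hshort, drop_of_length_le hshort]
      have hrest := ih (l := []) (q := 0) (by simp)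
      have hfirst := hg l q hl
      omega
    · have huq : u < q := Nat.lt_of_mul_lt_mul_left (a := m) (by omega)
      have hfirst := hg (l.take (m * u)) u (by simp)
      have hrest := ih (l := l.drop (m * u)) (q := q - u)
        (by rw [length_drop, Nat.mul_sub]; omega)
      omega

section

variable [DecidableEq α]

def finsetParts (L : List (List α)) : Finset (Finset α) :=
  ((L.filter (· ≠ [])).map toFinset).toFinset

theorem mem_finsetParts {L : List (List α)} {Q : Finset α} :
    Q ∈ finsetParts L ↔ ∃ P ∈ L, P ≠ [] ∧ P.toFinset = Q := by
  simp [finsetParts, and_assoc]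

theorem nonempty_of_mem_finsetParts {L : List (List α)} {Q : Finset α}
    (hQ : Q ∈ finsetParts L) : Q.Nonempty := by
  obtain ⟨P, -, hP, rfl⟩ := mem_finsetParts.mp hQ
  simpa [toFinset_nonempty_iff] using hP

theorem disjoint_of_mem_finsetParts {L : List (List α)} (hL : L.flatten.Nodup)
    {Q Q' : Finset α} (hQ : Q ∈ finsetParts L) (hQ' : Q' ∈ finsetParts L) (hne : Q ≠ Q') :
    _root_.Disjoint Q Q' := by
  obtain ⟨P, hP, -, rfl⟩ := mem_finsetParts.mp hQ
  obtain ⟨P', hP', -, rfl⟩ := mem_finsetParts.mp hQ'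
  have : Std.Symm (@List.Disjoint α) := ⟨fun _ _ => List.Disjoint.symm⟩
  have hdisj : P.Disjoint P' :=
    (nodup_flatten.mp hL).2.forall hP hP' fun h => hne (congrArg _ h)
  exact Finset.disjoint_left.mpr fun x hx hx' =>
    hdisj (mem_toFinset.mp hx) (mem_toFinset.mp hx')

theorem sup_finsetParts (L : List (List α)) : (finsetParts L).sup id = L.flatten.toFinset := by
  ext x
  simp only [Finset.mem_sup, mem_finsetParts, id, mem_toFinset, mem_flatten]
  constructor
  · rintro ⟨_, ⟨P, hP, -, rfl⟩, hx⟩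
    exact ⟨P, hP, mem_toFinset.mp hx⟩
  · rintro ⟨P, hP, hx⟩
    exact ⟨_, ⟨P, hP, ne_nil_of_mem hx, rfl⟩, mem_toFinset.mpr hx⟩

theorem card_finsetParts_le (L : List (List α)) : (finsetParts L).card ≤ L.countP (· ≠ []) :=
  (toFinset_card_le _).trans (by simp [countP_eq_length_filter])

theorem filter_finsetParts (L : List (List α)) (q : Finset α → Prop) [DecidablePred q] :
    (finsetParts L).filter q = finsetParts (L.filter fun P => q P.toFinset) := by
  ext Q
  simp only [Finset.mem_filter, mem_finsetParts, mem_filter, decide_eq_true_eq]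
  constructor
  · rintro ⟨⟨P, hP, hne, rfl⟩, hq⟩
    exact ⟨P, ⟨hP, hq⟩, hne, rfl⟩
  · rintro ⟨P, ⟨hP, hq⟩, hne, rfl⟩
    exact ⟨⟨P, hP, hne, rfl⟩, hq⟩

theorem card_filter_finsetParts_le (L : List (List α)) (q : Finset α → Prop) [DecidablePred q] :
    ((finsetParts L).filter q).card ≤ L.countP fun P => q P.toFinset := by
  rw [filter_finsetParts]
  refine (card_finsetParts_le _).trans ?_
  rw [countP_eq_length_filter (l := L)]
  exact countP_le_length

end

end List

namespace KDTree

variable {α β : Type*} [LinearOrder β]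

/-- Typical example: `P` has points on both sides of the hyperplane `f = c`. -/
structure IsTransversal (f : α → β) (q : Finset α → Prop) : Prop where
  mono : ∀ ⦃P Q⦄, P ⊆ Q → q P → q Q
  not_both : ∀ ⦃P Q⦄, (∀ x ∈ P, ∀ y ∈ Q, f x ≤ f y) → q P → q Q → False

theorem isTransversal_lt_le (f : α → β) (c : β) :
    IsTransversal f fun P => (∃ x ∈ P, f x < c) ∧ ∃ y ∈ P, c ≤ f y where
  mono _ _ h := fun ⟨⟨x, hx, hxc⟩, y, hy, hcy⟩ => ⟨⟨x, h hx, hxc⟩, y, h hy, hcy⟩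
  not_both _ _ hPQ := fun ⟨_, y, hy, hcy⟩ ⟨⟨x, hx, hxc⟩, _⟩ =>
    (hcy.trans (hPQ y hy x hx)).not_gt hxc

theorem isTransversal_le_lt (f : α → β) (c : β) :
    IsTransversal f fun P => (∃ x ∈ P, f x ≤ c) ∧ ∃ y ∈ P, c < f y where
  mono _ _ h := fun ⟨⟨x, hx, hxc⟩, y, hy, hcy⟩ => ⟨⟨x, h hx, hxc⟩, y, h hy, hcy⟩
  not_both _ _ hPQ := fun ⟨_, y, hy, hcy⟩ ⟨⟨x, hx, hxc⟩, _⟩ =>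
    (hcy.trans_le (hPQ y hy x hx)).not_ge hxc

variable (key : ℕ → α → β) (m t : ℕ)

def blocks (k : ℕ) (l : List α) : List (List α) :=
  (List.replicate t (m * t ^ k)).splitLengths (l.mergeSort fun x y => key k x ≤ key k y)

def leaves : ℕ → List α → List (List α)
  | 0, l => [l]
  | k + 1, l => (blocks key m t k l).flatMap (leaves k)

variable {key m t}

theorem length_blocks (k : ℕ) (l : List α) : (blocks key m t k l).length = t := by
  simp [blocks]

theorem length_le_of_mem_blocks {k : ℕ} {l c : List α} (hc : c ∈ blocks key m t k l) :
    c.length ≤ m * t ^ k :=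
  List.length_mem_splitLengths _ _ _ (fun _ h => (List.eq_of_mem_replicate h).le) c hc

theorem flatten_blocks {k : ℕ} {l : List α} (hl : l.length ≤ m * t ^ (k + 1)) :
    (blocks key m t k l).flatten = l.mergeSort fun x y => key k x ≤ key k y := by
  refine List.flatten_splitLengths _ _ ?_
  rw [List.length_mergeSort, List.sum_replicate, smul_eq_mul]
  calc l.length ≤ m * t ^ (k + 1) := hl
    _ = t * (m * t ^ k) := by ring

theorem pairwise_blocks {k : ℕ} {l : List α} (hl : l.length ≤ m * t ^ (k + 1)) :
    (blocks key m t k l).Pairwise fun c c' => ∀ x ∈ c, ∀ y ∈ c', key k x ≤ key k y := by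
  have hsorted := List.pairwise_mergeSort (le := fun x y => decide (key k x ≤ key k y))
    (fun _ _ _ h h' => by simp only [decide_eq_true_eq] at *; exact h.trans h')
    (fun a b => by simpa using le_total (key k a) (key k b)) l
  rw [← flatten_blocks hl] at hsorted
  exact (List.pairwise_flatten.mp hsorted).2.imp fun h x hx y hy => by
    simpa using h x hx y hy

theorem length_leaves (k : ℕ) (l : List α) : (leaves key m t k l).length = t ^ k := by
  induction k generalizing l with
  | zero => rfl
  | succ k ih =>
    simp only [leaves, List.length_flatMap, ih, List.map_const', List.sum_replicate,
      length_blocks, smul_eq_mul, pow_succ']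

theorem flatten_leaves_perm {k : ℕ} {l : List α} (hl : l.length ≤ m * t ^ k) :
    (leaves key m t k l).flatten.Perm l := by
  induction k generalizing l with
  | zero => simp [leaves]
  | succ k ih =>
    have hsplit : (leaves key m t (k + 1) l).flatten =
        (blocks key m t k l).flatMap fun c => (leaves key m t k c).flatten := by
      simp [leaves, List.flatMap, List.flatten_flatten, Function.comp_def]
    rw [hsplit]
    refine (List.Perm.flatMap_left _ fun c hc => ih (length_le_of_mem_blocks hc)).trans ?_
    rw [List.flatMap_id', flatten_blocks hl]
    exact List.mergeSort_perm l _

theorem subset_of_mem_leaves {k : ℕ} {l P : List α} (hl : l.length ≤ m * t ^ k)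
    (hP : P ∈ leaves key m t k l) : P ⊆ l := fun _ hx =>
  (flatten_leaves_perm hl).subset (List.mem_flatten.mpr ⟨P, hP, hx⟩)

theorem length_le_of_mem_leaves {k : ℕ} {l P : List α} (hl : l.length ≤ m * t ^ k)
    (hP : P ∈ leaves key m t k l) : P.length ≤ m := by
  induction k generalizing l with
  | zero =>
    rw [leaves, List.mem_singleton] at hP
    simpa [hP] using hl
  | succ k ih =>
    obtain ⟨c, hc, hPc⟩ := List.mem_flatMap.mp hP
    exact ih (length_le_of_mem_blocks hc) hPc

theorem countP_ne_nil_leaves_le {k q : ℕ} {l : List α} (hl : l.length ≤ m * q) :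
    (leaves key m t k l).countP (· ≠ []) ≤ q := by
  induction k generalizing l q with
  | zero =>
    rcases l with _ | ⟨x, l⟩
    · simp [leaves]
    · have hq : q ≠ 0 := by rintro rfl; simp at hl
      simpa [leaves, Nat.one_le_iff_ne_zero] using hq
  | succ k ih =>
    rw [leaves, List.countP_flatMap]
    exact List.sum_map_splitLengths_replicate_le (fun _ _ hc => ih hc) t
      (by rwa [List.length_mergeSort])

theorem countP_leaves_le [DecidableEq α] {j k : ℕ} {l : List α} {q : Finset α → Prop}
    [DecidablePred q] (hq : IsTransversal (key j) q) (hj : j < k) (hl : l.length ≤ m * t ^ k) :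
    (leaves key m t k l).countP (fun P => q P.toFinset) ≤ t ^ (k - 1) := by
  induction k generalizing l with
  | zero => omega
  | succ k ih =>
    rw [leaves, List.countP_flatMap, Nat.add_sub_cancel]
    rcases Nat.lt_succ_iff_lt_or_eq.mp hj with hjk | rfl
    · calc _ ≤ t * t ^ (k - 1) := by
            refine (List.sum_le_card_nsmul _ (t ^ (k - 1)) ?_).trans_eq
              (by simp [length_blocks])
            simp only [List.mem_map, Function.comp_apply]
            rintro _ ⟨c, hc, rfl⟩
            exact ih hjk (length_le_of_mem_blocks hc)
        _ = t ^ k := by rw [← pow_succ', Nat.sub_add_cancel (Nat.one_le_of_lt hjk)]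
    · -- the leaves satisfying `q` all lie in a single block
      have hblock : ∀ c ∈ blocks key m t j l,
          0 < (leaves key m t j c).countP (fun P => q P.toFinset) → q c.toFinset := by
        intro c hc hpos
        obtain ⟨P, hP, hqP⟩ := List.countP_pos_iff.mp hpos
        have hPc := subset_of_mem_leaves (length_le_of_mem_blocks hc) hP
        exact hq.mono (fun x hx => List.mem_toFinset.mpr (hPc (List.mem_toFinset.mp hx)))
          (of_decide_eq_true hqP)
      refine List.sum_le_of_pairwise_eq_zero_or ?_ ?_
      · simp only [List.mem_map, Function.comp_apply]
        rintro _ ⟨c, -, rfl⟩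
        exact List.countP_le_length.trans (length_leaves j c).le
      · refine List.pairwise_map.mpr ((pairwise_blocks hl).imp_of_mem fun hc hc' hord => ?_)
        by_contra! h
        refine hq.not_both ?_ (hblock _ hc (Nat.pos_of_ne_zero h.1))
          (hblock _ hc' (Nat.pos_of_ne_zero h.2))
        simpa using hord

theorem card_filter_finsetParts_leaves_le [DecidableEq α] {j k : ℕ} {l : List α}
    {q : Finset α → Prop} [DecidablePred q] (hq : IsTransversal (key j) q) (hj : j < k)
    (hl : l.length ≤ m * t ^ k) :
    ((leaves key m t k l).finsetParts.filter q).card ≤ t ^ (k - 1) :=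
  (List.card_filter_finsetParts_le _ q).trans (countP_leaves_le hq hj hl)

theorem card_filter_partial_box_le {ι : Type*} [Fintype ι] (Pi : Finset (Finset (ι → ℝ)))
    (a b : ι → ℝ) {N : ℕ}
    (hN : ∀ i q [DecidablePred q], IsTransversal (fun x : ι → ℝ => x i) q →
      (Pi.filter q).card ≤ N) :
    (Pi.filter fun P => (∃ x ∈ P, ∀ i, a i ≤ x i ∧ x i ≤ b i) ∧
      ¬ ∀ x ∈ P, ∀ i, a i ≤ x i ∧ x i ≤ b i).card ≤ 2 * Fintype.card ι * N := by
  set below := fun i => Pi.filter fun P => (∃ x ∈ P, x i < a i) ∧ ∃ y ∈ P, a i ≤ y i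
  set above := fun i => Pi.filter fun P => (∃ x ∈ P, x i ≤ b i) ∧ ∃ y ∈ P, b i < y i
  refine (Finset.card_le_card (t := Finset.univ.biUnion fun i => below i ∪ above i)
    fun P hP => ?_).trans ?_
  · simp only [Finset.mem_filter, not_forall] at hP
    obtain ⟨hPi, ⟨x, hx, hxbox⟩, y, hy, i, hyi⟩ := hP
    simp only [Finset.mem_biUnion, Finset.mem_univ, true_and, Finset.mem_union, below, above,
      Finset.mem_filter]
    refine ⟨i, ?_⟩
    by_cases hay : a i ≤ y i
    · exact Or.inr ⟨hPi, ⟨x, hx, (hxbox i).2⟩, y, hy, lt_of_not_ge (hyi ⟨hay, ·⟩)⟩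
    · exact Or.inl ⟨hPi, ⟨y, hy, lt_of_not_ge hay⟩, x, hx, (hxbox i).1⟩
  calc _ ≤ ∑ i, (below i ∪ above i).card := Finset.card_biUnion_le
    _ ≤ ∑ _i : ι, (N + N) := Finset.sum_le_sum fun i _ =>
        (Finset.card_union_le _ _).trans (add_le_add
          (hN i _ (isTransversal_lt_le (fun x : ι → ℝ => x i) (a i)))
          (hN i _ (isTransversal_le_lt (fun x : ι → ℝ => x i) (b i))))
    _ = 2 * Fintype.card ι * N := by
        rw [Finset.sum_const, Finset.card_univ, smul_eq_mul]
        ring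

end KDTree

theorem le_ceil_rpow_inv_pow {r : ℝ} (hr : 0 ≤ r) {d : ℕ} (hd : d ≠ 0) :
    r ≤ (⌈r ^ (d : ℝ)⁻¹⌉₊ : ℝ) ^ d :=
  calc r = (r ^ (d : ℝ)⁻¹) ^ d := by
        rw [← Real.rpow_natCast, ← Real.rpow_mul hr, inv_mul_cancel₀ (by positivity),
          Real.rpow_one]
    _ ≤ _ := pow_le_pow_left₀ (by positivity) (Nat.le_ceil _) d

theorem ceil_rpow_inv_pow_pred_le {r : ℝ} (hr : 1 ≤ r) {d : ℕ} (hd : d ≠ 0) :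
    (⌈r ^ (d : ℝ)⁻¹⌉₊ : ℝ) ^ (d - 1) ≤ 2 ^ (d - 1) * r ^ (1 - 1 / (d : ℝ)) := by
  have hx : 1 ≤ r ^ (d : ℝ)⁻¹ := Real.one_le_rpow hr (by positivity)
  calc (⌈r ^ (d : ℝ)⁻¹⌉₊ : ℝ) ^ (d - 1) ≤ (2 * r ^ (d : ℝ)⁻¹) ^ (d - 1) :=
        pow_le_pow_left₀ (by positivity) (Nat.ceil_le_two_mul (by linarith)) _
    _ = 2 ^ (d - 1) * r ^ (1 - 1 / (d : ℝ)) := by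
        rw [mul_pow, ← Real.rpow_natCast (r ^ _), ← Real.rpow_mul (by linarith),
          Nat.cast_sub (by omega)]
        field_simp
        simp

open KDTree List in
/-- Partition lemma, part (i): for every `d ≥ 1` there is a constant `C > 0` such that
any finite set `S` of `n` points in `ℝ^d` and any `1 ≤ r ≤ n` admit a partition of `S`
into at most `r` parts, each of size at most `⌈n/r⌉`, such that every axis-aligned box
partially intersects at most `C · r^(1-1/d)` parts. -/
theorem partition_lemma_boxes (d : ℕ) (hd : 1 ≤ d) :
    ∃ C : ℝ, 0 < C ∧
      ∀ (S : Finset (Fin d → ℝ)) (n r : ℕ), n = S.card → 1 ≤ r → r ≤ n →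
        ∃ Pi : Finset (Finset (Fin d → ℝ)),
          (∀ P ∈ Pi, P.Nonempty) ∧
          (∀ P ∈ Pi, ∀ Q ∈ Pi, P ≠ Q → Disjoint P Q) ∧
          (Pi.sup id = S) ∧
          Pi.card ≤ r ∧
          (∀ P ∈ Pi, P.card ≤ ⌈(n : ℝ) / r⌉₊) ∧
          (∀ a b : Fin d → ℝ, (∀ i, a i ≤ b i) →
            ((Pi.filter (fun P =>
              (∃ x ∈ P, ∀ i, a i ≤ x i ∧ x i ≤ b i) ∧
              ¬ (∀ x ∈ P, ∀ i, a i ≤ x i ∧ x i ≤ b i))).card : ℝ) ≤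
              C * (r : ℝ) ^ (1 - 1 / (d : ℝ))) := by
  refine ⟨2 * d * 2 ^ (d - 1), by positivity, fun S n r hn hr hrn => ?_⟩
  set m := ⌈(n : ℝ) / r⌉₊
  set t := ⌈(r : ℝ) ^ (d : ℝ)⁻¹⌉₊
  have hnr : S.toList.length ≤ m * r := by
    have := (div_le_iff₀ (by positivity : (0 : ℝ) < r)).mp (Nat.le_ceil ((n : ℝ) / r))
    rw [Finset.length_toList, ← hn]
    exact_mod_cast this
  have hnt : S.toList.length ≤ m * t ^ d := by
    have := le_ceil_rpow_inv_pow (Nat.cast_nonneg r) (by omega : d ≠ 0)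
    exact hnr.trans (Nat.mul_le_mul_left m (by exact_mod_cast this))
  set L := leaves (fun j (x : Fin d → ℝ) => if h : j < d then x ⟨j, h⟩ else 0) m t d
    S.toList
  have hperm : L.flatten.Perm S.toList := flatten_leaves_perm hnt
  have hnodup : L.flatten.Nodup := hperm.nodup_iff.mpr S.nodup_toList
  refine ⟨L.finsetParts, fun _ => nonempty_of_mem_finsetParts,
    fun _ hQ _ hQ' => disjoint_of_mem_finsetParts hnodup hQ hQ', ?_,
    (card_finsetParts_le L).trans (countP_ne_nil_leaves_le hnr), fun Q hQ => ?_, fun a b _ => ?_⟩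
  · rw [sup_finsetParts, toFinset_eq_of_perm _ _ hperm, Finset.toList_toFinset]
  · obtain ⟨P, hP, -, rfl⟩ := mem_finsetParts.mp hQ
    exact (toFinset_card_le P).trans (length_le_of_mem_leaves hnt hP)
  · have hbox := card_filter_partial_box_le L.finsetParts a b (N := t ^ (d - 1))
      fun i q _ hq => card_filter_finsetParts_leaves_le (j := i) (by simpa using hq) i.isLt hnt
    rw [Fintype.card_fin] at hbox
    -- `convert` only reconciles the decidability instances of `∀ i : Fin d`
    calc _ ≤ ((2 * d * t ^ (d - 1) : ℕ) : ℝ) := Nat.cast_le.mpr (by convert hbox)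
      _ ≤ 2 * d * (2 ^ (d - 1) * (r : ℝ) ^ (1 - 1 / (d : ℝ))) := by
          push_cast
          gcongr
          exact ceil_rpow_inv_pow_pred_le (by exact_mod_cast hr) (by omega)
      _ = _ := by ring
end

section
/- (Partition lemma, part ii.) For every integer d ≥ 1 there exists a constant C > 0, depending only on d, with the following property. Let S be a finite set of n points of ℝ^d and let r be an integer with 1 ≤ r ≤ n. Then there exists a partition Π of S into at most r pairwise disjoint subsets, each of cardinality at most ⌈n/r⌉, such that for every axis-aligned box B ⊆ ℝ^d, the number of points of S ∩ B that belong to subsets of Π not fully contained in B is at most min{|S ∩ B|, C · n / r^{1/d}}. -/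
/-!
Partitions are encoded by labelings `c : α → ℕ`, the parts being the classes of `c`, and the
theorem is proved by induction on the number of coordinates. Sort the points along a new
coordinate, cut them into at most `r` blocks of at most `q = ⌈n/r⌉` consecutive points, and
group consecutive blocks into about `r^θ` slabs of about `r^(1-θ)` blocks each; inside each
slab, partition recursively along the old coordinates with one part per block. Only the two
extreme slabs met by a box can be cut by it in the new coordinate; they contribute about
`q r^(1-θ)` crossing points. Every other slab lies in the box's range in the new coordinate, so
only its inner partition matters, and with exponent `e` for the old coordinates the slabs
contribute about `C q r^(θ + (1-θ)(1-e))` together. The choice `θ = e/(1+e)` balances the two,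
taking the exponent `1/k` for `k` coordinates to `1/(k+1)`.
-/

open scoped Classical

open Finset

namespace PartitionLemma

open scoped SetFamily

variable {α : Type*}

theorem exists_rank (f : α → ℝ) (S : Finset α) :
    ∃ σ : α → ℕ, Set.InjOn σ S ∧ (∀ x ∈ S, σ x < #S) ∧
      ∀ x ∈ S, ∀ y ∈ S, σ x < σ y → f x ≤ f y := by
  induction S using Finset.induction_on_max_value f with
  | empty => exact ⟨fun _ => 0, by simp, by simp, by simp⟩
  | insert a S ha hmax ih =>
    obtain ⟨σ, hinj, hlt, hmono⟩ := ih
    set σ' : α → ℕ := fun x => if x = a then #S else σ x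
    have hσ'a : σ' a = #S := if_pos rfl
    have hσ'S : ∀ x ∈ S, σ' x = σ x := fun x hx => if_neg (ne_of_mem_of_not_mem hx ha)
    refine ⟨σ', ?_, ?_, ?_⟩
    · rw [coe_insert, Set.injOn_insert (mem_coe.not.2 ha)]
      refine ⟨hinj.congr fun x hx => (hσ'S x hx).symm, ?_⟩
      rintro ⟨x, hx, hxa⟩
      exact (hlt x hx).ne (by rw [← hσ'S x hx, hxa, hσ'a])
    · rw [card_insert_of_notMem ha]
      intro x hx
      rcases mem_insert.1 hx with rfl | hxS
      · exact hσ'a ▸ Nat.lt_succ_self _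
      · exact hσ'S x hxS ▸ (hlt x hxS).trans (Nat.lt_succ_self _)
    · intro x hx y hy hxy
      rcases mem_insert.1 hx with rfl | hxS <;> rcases mem_insert.1 hy with rfl | hyS
      · exact le_rfl
      · rw [hσ'a, hσ'S y hyS] at hxy
        exact absurd (hlt y hyS) hxy.not_gt
      · exact hmax x hxS
      · rw [hσ'S x hxS, hσ'S y hyS] at hxy
        exact hmono x hxS y hyS hxy

theorem card_image_le_of_forall_lt {S : Finset α} {b : α → ℕ} {r : ℕ} (h : ∀ x ∈ S, b x < r) :
    #(S.image b) ≤ r := by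
  simpa using card_le_card (t := range r) (image_subset_iff.2 fun x hx => mem_range.2 (h x hx))

theorem card_filter_div_eq_le (T : Finset ℕ) {g : ℕ} (hg : 0 < g) (j : ℕ) :
    #{l ∈ T | l / g = j} ≤ g :=
  calc #{l ∈ T | l / g = j} ≤ #(Ico (j * g) (j * g + g)) := card_le_card fun l hl => by
        have := (Nat.div_eq_iff hg).1 (mem_filter.1 hl).2
        rw [mem_Ico]
        omega
    _ = g := by simp

theorem exists_monotone_labeling (f : α → ℝ) (S : Finset α) {r q : ℕ} (hS : #S ≤ r * q) :
    ∃ b : α → ℕ, (∀ x ∈ S, b x < r) ∧ (∀ x ∈ S, #{y ∈ S | b y = b x} ≤ q) ∧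
      ∀ x ∈ S, ∀ y ∈ S, b x < b y → f x ≤ f y := by
  obtain ⟨σ, hinj, hlt, hmono⟩ := exists_rank f S
  rcases q.eq_zero_or_pos with rfl | hq
  · simp_all
  refine ⟨fun x => σ x / q,
    fun x hx => Nat.div_lt_of_lt_mul ((hlt x hx).trans_le (hS.trans_eq (mul_comm r q))),
    fun x _ => ?_, fun x hx y hy h => hmono x hx y hy (Nat.lt_of_div_lt_div h)⟩
  calc #{y ∈ S | σ y / q = σ x / q} ≤ #{l ∈ S.image σ | l / q = σ x / q} :=
        card_le_card_of_injOn σ (fun y hy => mem_filter.2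
          ⟨mem_image_of_mem σ (mem_filter.1 hy).1, (mem_filter.1 hy).2⟩)
          (hinj.mono (coe_subset.2 (filter_subset _ _)))
    _ ≤ q := card_filter_div_eq_le _ hq _

noncomputable def crossing (c : α → ℕ) (S : Finset α) (B : Set α) : Finset α :=
  {x ∈ S | x ∈ B ∧ ∃ y ∈ S, c y = c x ∧ y ∉ B}

theorem mem_crossing {c : α → ℕ} {S : Finset α} {B : Set α} {x : α} :
    x ∈ crossing c S B ↔ x ∈ S ∧ x ∈ B ∧ ∃ y ∈ S, c y = c x ∧ y ∉ B :=
  mem_filter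

def classes [DecidableEq α] (c : α → ℕ) (S : Finset α) : Finset (Finset α) :=
  S.image fun x => {y ∈ S | c y = c x}

section classes

variable [DecidableEq α] {c : α → ℕ} {S : Finset α}

theorem nonempty_of_mem_classes {P : Finset α} (hP : P ∈ classes c S) : P.Nonempty := by
  obtain ⟨x, hx, rfl⟩ := mem_image.1 hP
  exact ⟨x, mem_filter.2 ⟨hx, rfl⟩⟩

theorem disjoint_of_mem_classes {P Q : Finset α} (hP : P ∈ classes c S) (hQ : Q ∈ classes c S)
    (hPQ : P ≠ Q) : Disjoint P Q := by
  obtain ⟨x, -, rfl⟩ := mem_image.1 hP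
  obtain ⟨y, -, rfl⟩ := mem_image.1 hQ
  refine disjoint_filter.2 fun z _ hzx hzy => hPQ ?_
  rw [← hzx, ← hzy]

theorem sup_classes : (classes c S).sup id = S := by
  ext x
  rw [mem_sup]
  constructor
  · rintro ⟨P, hP, hxP⟩
    obtain ⟨y, -, rfl⟩ := mem_image.1 hP
    exact (mem_filter.1 hxP).1
  · exact fun hx => ⟨_, mem_image_of_mem _ hx, mem_filter.2 ⟨hx, rfl⟩⟩

theorem card_le_of_mem_classes {q : ℕ} (hc : ∀ x ∈ S, #{y ∈ S | c y = c x} ≤ q) {P : Finset α}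
    (hP : P ∈ classes c S) : #P ≤ q := by
  obtain ⟨x, hx, rfl⟩ := mem_image.1 hP
  exact hc x hx

theorem card_classes_le : #(classes c S) ≤ #(S.image c) := by
  calc #(classes c S) = #((S.image c).image fun l => {y ∈ S | c y = l}) := by
        rw [image_image]; rfl
    _ ≤ #(S.image c) := card_image_le

theorem mem_crossing_iff_classes {B : Set α} {x : α} :
    x ∈ crossing c S B ↔ x ∈ S ∧ x ∈ B ∧ ∃ P ∈ classes c S, x ∈ P ∧ ¬ ∀ y ∈ P, y ∈ B := by
  rw [mem_crossing]
  constructor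
  · rintro ⟨hx, hxB, y, hy, hyx, hyB⟩
    exact ⟨hx, hxB, _, mem_image_of_mem _ hx, mem_filter.2 ⟨hx, rfl⟩,
      fun h => hyB (h y (mem_filter.2 ⟨hy, hyx⟩))⟩
  · rintro ⟨hx, hxB, _, hP, hxP, hPB⟩
    obtain ⟨z, -, rfl⟩ := mem_image.1 hP
    obtain ⟨y, hy, hyB⟩ := not_forall₂.1 hPB
    exact ⟨hx, hxB, y, (mem_filter.1 hy).1, (mem_filter.1 hy).2.trans (mem_filter.1 hxP).2.symm,
      hyB⟩

end classes

def slabs (f : α → ℝ) : Set (Set α) :=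
  {I | ∃ a b : ℝ, I = {x | a ≤ f x ∧ f x ≤ b}}

theorem card_crossing_slab_le {f : α → ℝ} {S : Finset α} {s : α → ℕ}
    (hs : ∀ x ∈ S, ∀ y ∈ S, s x < s y → f x ≤ f y) {m : ℕ}
    (hm : ∀ x ∈ S, #{y ∈ S | s y = s x} ≤ m) {I : Set α} (hI : I ∈ slabs f) :
    #(crossing s S I) ≤ 2 * m := by
  obtain ⟨a, b, rfl⟩ := hI
  set L := {x ∈ S | a ≤ f x ∧ f x ≤ b}
  rcases L.eq_empty_or_nonempty with hL | hL
  · rw [card_eq_zero.2]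
    · exact Nat.zero_le _
    refine eq_empty_iff_forall_notMem.2 fun x hx => ?_
    obtain ⟨hxS, hxI, -⟩ := mem_crossing.1 hx
    exact (eq_empty_iff_forall_notMem.1 hL) x (mem_filter.2 ⟨hxS, hxI⟩)
  obtain ⟨lo, hlo, hlo_min⟩ := exists_min_image L s hL
  obtain ⟨hi, hhi, hhi_max⟩ := exists_max_image L s hL
  have hsub : crossing s S {x | a ≤ f x ∧ f x ≤ b} ⊆
      {y ∈ S | s y = s lo} ∪ {y ∈ S | s y = s hi} := by
    intro x hx
    obtain ⟨hxS, hxI, y, hyS, hyx, hyI⟩ := mem_crossing.1 hx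
    have hxL : x ∈ L := mem_filter.2 ⟨hxS, hxI⟩
    -- a class strictly between the lowest and highest classes meeting `I` lies inside `I`
    have hext : s x = s lo ∨ s x = s hi := by
      by_contra! hne
      have hlo_y : s lo < s y := hyx ▸ (hlo_min x hxL).lt_of_ne hne.1.symm
      have hy_hi : s y < s hi := hyx ▸ (hhi_max x hxL).lt_of_ne hne.2
      exact hyI ⟨(mem_filter.1 hlo).2.1.trans (hs lo (filter_subset _ _ hlo) y hyS hlo_y),
        (hs y hyS hi (filter_subset _ _ hhi) hy_hi).trans (mem_filter.1 hhi).2.2⟩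
    rcases hext with h | h <;> simp [h, hxS]
  calc #(crossing s S _) ≤ #({y ∈ S | s y = s lo} ∪ {y ∈ S | s y = s hi}) := card_le_card hsub
    _ ≤ m + m := (card_union_le _ _).trans
        (add_le_add (hm lo (filter_subset _ _ hlo)) (hm hi (filter_subset _ _ hhi)))
    _ = 2 * m := (two_mul m).symm

def glue (s : α → ℕ) (t : ℕ → α → ℕ) (x : α) : ℕ :=
  Nat.pair (s x) (t (s x) x)

section glue

variable {s : α → ℕ} {t : ℕ → α → ℕ}

theorem glue_eq_glue_iff {x y : α} :
    glue s t y = glue s t x ↔ s y = s x ∧ t (s x) y = t (s x) x := by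
  rw [glue, glue, Nat.pair_eq_pair]
  constructor
  · rintro ⟨h1, h2⟩; exact ⟨h1, h1 ▸ h2⟩
  · rintro ⟨h1, h2⟩; exact ⟨h1, h1 ▸ h2⟩

theorem card_image_glue_le (S : Finset α) :
    #(S.image (glue s t)) ≤ ∑ j ∈ S.image s, #({x ∈ S | s x = j}.image (t j)) := by
  calc #(S.image (glue s t))
      ≤ #((S.image s).biUnion fun j => ({x ∈ S | s x = j}.image (t j)).image (Nat.pair j)) := by
        refine card_le_card fun l hl => ?_
        obtain ⟨x, hx, rfl⟩ := mem_image.1 hl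
        simp only [mem_biUnion, mem_image, mem_filter]
        exact ⟨s x, ⟨x, hx, rfl⟩, t (s x) x, ⟨x, ⟨hx, rfl⟩, rfl⟩, rfl⟩
    _ ≤ ∑ j ∈ S.image s, #(({x ∈ S | s x = j}.image (t j)).image (Nat.pair j)) := card_biUnion_le
    _ ≤ _ := sum_le_sum fun j _ => card_image_le

theorem filter_glue_eq_subset (S : Finset α) (x : α) :
    {y ∈ S | glue s t y = glue s t x} ⊆ {y ∈ {z ∈ S | s z = s x} | t (s x) y = t (s x) x} := by
  intro y hy
  simp only [mem_filter, glue_eq_glue_iff] at hy ⊢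
  exact ⟨⟨hy.1, hy.2.1⟩, hy.2.2⟩

theorem crossing_glue_inter_subset (S : Finset α) (B I : Set α) :
    crossing (glue s t) S (B ∩ I) ⊆
      crossing s S I ∪ (S.image s).biUnion fun j => crossing (t j) {x ∈ S | s x = j} B := by
  intro x hx
  obtain ⟨hxS, ⟨hxB, hxI⟩, y, hyS, hyx, hyBI⟩ := mem_crossing.1 hx
  rw [glue_eq_glue_iff] at hyx
  by_cases hyI : y ∈ I
  · refine mem_union_right _ (mem_biUnion.2 ⟨s x, mem_image_of_mem s hxS, ?_⟩)
    exact mem_crossing.2 ⟨mem_filter.2 ⟨hxS, rfl⟩, hxB, y, mem_filter.2 ⟨hyS, hyx.1⟩, hyx.2,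
      fun hyB => hyBI ⟨hyB, hyI⟩⟩
  · exact mem_union_left _ (mem_crossing.2 ⟨hxS, hxI, y, hyS, hyx.1, hyI⟩)

end glue

-- The bound is stated through the class size `q` rather than `#S`, because a slab inherits `q`
-- from the whole set while having fewer classes; with `q = ⌈n/r⌉` it is at most `2 C n / r^e`.
def HasCrossingBound (𝓑 : Set (Set α)) (C e : ℝ) : Prop :=
  ∀ (S : Finset α) (r q : ℕ), 0 < r → #S ≤ r * q → ∃ c : α → ℕ,
    #(S.image c) ≤ r ∧ (∀ x ∈ S, #{y ∈ S | c y = c x} ≤ q) ∧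
      ∀ B ∈ 𝓑, (#(crossing c S B) : ℝ) ≤ C * q * r ^ (1 - e)

theorem HasCrossingBound.mono {𝓑 𝓑' : Set (Set α)} {C e : ℝ} (h : HasCrossingBound 𝓑 C e)
    (h𝓑 : 𝓑' ⊆ 𝓑) : HasCrossingBound 𝓑' C e := fun S r q hr hS =>
  (h S r q hr hS).imp fun _ ⟨himage, hclass, hcross⟩ =>
    ⟨himage, hclass, fun B hB => hcross B (h𝓑 hB)⟩

theorem hasCrossingBound_slabs (f : α → ℝ) : HasCrossingBound (slabs f) 2 1 := by
  intro S r q _ hS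
  obtain ⟨b, hb_lt, hb_class, hb_mono⟩ := exists_monotone_labeling f S hS
  refine ⟨b, card_image_le_of_forall_lt hb_lt, hb_class, fun I hI => ?_⟩
  rw [sub_self, Real.rpow_zero, mul_one]
  exact_mod_cast card_crossing_slab_le hb_mono hb_class hI

theorem exists_nat_le_mul_le_two_rpow {r θ : ℝ} (hr : 1 ≤ r) (hθ0 : 0 ≤ θ) (hθ1 : θ ≤ 1) :
    ∃ M g : ℕ, 0 < g ∧ r ≤ g * M ∧ (M : ℝ) ≤ 2 * r ^ θ ∧ (g : ℝ) ≤ 2 * r ^ (1 - θ) := by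
  have hr0 : 0 < r := one_pos.trans_le hr
  have hρ1 : 1 ≤ r ^ θ := Real.one_le_rpow hr hθ0
  have hρ'1 : 1 ≤ r ^ (1 - θ) := Real.one_le_rpow hr (sub_nonneg.2 hθ1)
  set M := ⌈r ^ θ⌉₊
  have hρM : r ^ θ ≤ M := Nat.le_ceil _
  have hM0 : (0 : ℝ) < M := by linarith
  refine ⟨M, ⌈r / M⌉₊, Nat.ceil_pos.2 (div_pos hr0 hM0), ?_, ?_, ?_⟩
  · exact (div_le_iff₀ hM0).1 (Nat.le_ceil _)
  · linarith [Nat.ceil_lt_add_one (zero_le_one.trans hρ1)]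
  · have hrM : r / M ≤ r ^ (1 - θ) := by
      rw [Real.rpow_sub hr0, Real.rpow_one]
      exact div_le_div_of_nonneg_left hr0.le (by linarith) hρM
    linarith [Nat.ceil_lt_add_one (div_pos hr0 hM0).le]

theorem add_mul_rpow_le_of_le_two_rpow {C e r q g M : ℝ} (hC : 0 ≤ C) (he0 : 0 ≤ e) (he1 : e ≤ 1)
    (hr : 1 ≤ r) (hq : 0 ≤ q) (hg0 : 0 ≤ g) (hg : g ≤ 2 * r ^ (1 - e / (1 + e)))
    (hM : M ≤ 2 * r ^ (e / (1 + e))) :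
    2 * (g * q) + M * (C * q * g ^ (1 - e)) ≤ (4 + 4 * C) * q * r ^ (1 - e / (1 + e)) := by
  set θ := e / (1 + e)
  have hr0 : 0 < r := one_pos.trans_le hr
  have hexp : θ + (1 - θ) * (1 - e) = 1 - θ := by
    simp only [θ]; field_simp; ring
  have hg_pow : g ^ (1 - e) ≤ 2 * r ^ ((1 - θ) * (1 - e)) := by
    calc g ^ (1 - e) ≤ (2 * r ^ (1 - θ)) ^ (1 - e) :=
          Real.rpow_le_rpow hg0 hg (sub_nonneg.2 he1)
      _ = 2 ^ (1 - e) * r ^ ((1 - θ) * (1 - e)) := by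
          rw [Real.mul_rpow (by norm_num) (by positivity), ← Real.rpow_mul hr0.le]
      _ ≤ 2 * r ^ ((1 - θ) * (1 - e)) := by
          gcongr
          exact Real.rpow_le_self_of_one_le (by norm_num) (by linarith)
  have hCq : 0 ≤ C * q := mul_nonneg hC hq
  calc 2 * (g * q) + M * (C * q * g ^ (1 - e))
      ≤ 2 * (2 * r ^ (1 - θ) * q) + 2 * r ^ θ * (C * q * (2 * r ^ ((1 - θ) * (1 - e)))) := by
        gcongr
    _ = 4 * q * r ^ (1 - θ) + 4 * C * q * (r ^ θ * r ^ ((1 - θ) * (1 - e))) := by ring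
    _ = (4 + 4 * C) * q * r ^ (1 - θ) := by rw [← Real.rpow_add hr0, hexp]; ring

theorem sum_card_image_filter_eq_card_image {β γ : Type*} [DecidableEq β] [DecidableEq γ]
    (S : Finset α) (b : α → β) (h : β → γ) :
    ∑ j ∈ S.image (fun x => h (b x)), #({x ∈ S | h (b x) = j}.image b) = #(S.image b) := by
  rw [card_eq_sum_card_image h (S.image b), image_image]
  exact sum_congr rfl fun j _ => by rw [filter_image]

theorem exists_slab_labeling (f : α → ℝ) (S : Finset α) {r q g M : ℕ} (hS : #S ≤ r * q)
    (hg : 0 < g) (hr : r ≤ g * M) :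
    ∃ (s : α → ℕ) (blocks : ℕ → ℕ), (∀ x ∈ S, ∀ y ∈ S, s x < s y → f x ≤ f y) ∧
      #(S.image s) ≤ M ∧ (∀ j, #{x ∈ S | s x = j} ≤ blocks j * q) ∧ (∀ j, blocks j ≤ g) ∧
      (∀ j ∈ S.image s, 0 < blocks j) ∧ ∑ j ∈ S.image s, blocks j ≤ r := by
  obtain ⟨b, hb_lt, hb_class, hb_mono⟩ := exists_monotone_labeling f S hS
  -- the classes of `b` are blocks of consecutive points, grouped into slabs of `g` blocks
  set s : α → ℕ := fun x => b x / g
  refine ⟨s, fun j => #({x ∈ S | s x = j}.image b),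
    fun x hx y hy hxy => hb_mono x hx y hy (Nat.lt_of_div_lt_div hxy), ?_, fun j => ?_,
    fun j => ?_, fun j hj => ?_, ?_⟩
  · exact card_image_le_of_forall_lt fun x hx => Nat.div_lt_of_lt_mul ((hb_lt x hx).trans_le hr)
  · rw [mul_comm]
    refine card_le_mul_card_image _ q fun l hl => ?_
    obtain ⟨x, hx, rfl⟩ := mem_image.1 hl
    exact (card_le_card (monotone_filter_left _ (filter_subset _ _))).trans
      (hb_class x (filter_subset _ _ hx))
  · refine (card_le_card fun l hl => ?_).trans (card_filter_div_eq_le (S.image b) hg j)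
    obtain ⟨x, hx, rfl⟩ := mem_image.1 hl
    exact mem_filter.2 ⟨mem_image_of_mem b (mem_filter.1 hx).1, (mem_filter.1 hx).2⟩
  · obtain ⟨x, hx, rfl⟩ := mem_image.1 hj
    exact card_pos.2 ⟨b x, mem_image_of_mem b (mem_filter.2 ⟨hx, rfl⟩)⟩
  · rw [sum_card_image_filter_eq_card_image S b (· / g)]
    exact card_image_le_of_forall_lt hb_lt

theorem HasCrossingBound.infs_slabs {𝓑 : Set (Set α)} {C e : ℝ} (h : HasCrossingBound 𝓑 C e)
    (hC : 0 ≤ C) (he0 : 0 ≤ e) (he1 : e ≤ 1) (f : α → ℝ) :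
    HasCrossingBound (𝓑 ⊼ slabs f) (4 + 4 * C) (e / (1 + e)) := by
  choose! t ht_image ht_class ht_cross using h
  intro S r q hr hS
  obtain ⟨M, g, hg, hrgM, hM, hg2⟩ := exists_nat_le_mul_le_two_rpow (r := r) (θ := e / (1 + e))
    (by exact_mod_cast hr) (by positivity) (div_le_one_of_le₀ (by linarith) (by linarith))
  obtain ⟨s, blocks, hs_mono, hslabs, hslab_card, hblocks_le, hblocks_pos, hblocks_sum⟩ :=
    exists_slab_labeling f S hS hg (by exact_mod_cast hrgM)
  set slab : ℕ → Finset α := fun j => {x ∈ S | s x = j}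
  refine ⟨glue s fun j => t (slab j) (blocks j) q, ?_, fun x hx => ?_, ?_⟩
  · calc #(S.image _) ≤ ∑ j ∈ S.image s, #((slab j).image (t (slab j) (blocks j) q)) :=
          card_image_glue_le S
      _ ≤ ∑ j ∈ S.image s, blocks j :=
          sum_le_sum fun j hj => ht_image _ _ _ (hblocks_pos j hj) (hslab_card j)
      _ ≤ r := hblocks_sum
  · exact (card_le_card (filter_glue_eq_subset S x)).trans (ht_class _ _ _
      (hblocks_pos _ (mem_image_of_mem s hx)) (hslab_card _) x (mem_filter.2 ⟨hx, rfl⟩))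
  · rw [Set.forall_infs_iff]
    rintro B hB I hI
    have hcut : #(crossing s S I) ≤ 2 * (g * q) := card_crossing_slab_le hs_mono
      (fun x hx => (hslab_card (s x)).trans (Nat.mul_le_mul_right q (hblocks_le _))) hI
    have hinner : ∀ j ∈ S.image s,
        (#(crossing (t (slab j) (blocks j) q) (slab j) B) : ℝ) ≤ C * q * g ^ (1 - e) :=
      fun j hj => (ht_cross _ _ _ (hblocks_pos j hj) (hslab_card j) B hB).trans (by
        gcongr
        exact_mod_cast hblocks_le j)
    calc (#(crossing _ S (B ⊓ I)) : ℝ)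
        ≤ #(crossing s S I) +
            ∑ j ∈ S.image s, #(crossing (t (slab j) (blocks j) q) (slab j) B) := by
          exact_mod_cast (card_le_card (crossing_glue_inter_subset S B I)).trans
            ((card_union_le _ _).trans (add_le_add_right card_biUnion_le _))
      _ ≤ 2 * (g * q) + M * (C * q * g ^ (1 - e)) := by
          gcongr
          · exact_mod_cast hcut
          · push_cast
            refine (sum_le_card_nsmul _ _ _ hinner).trans ?_
            rw [nsmul_eq_mul]
            gcongr
      _ ≤ _ := add_mul_rpow_le_of_le_two_rpow hC he0 he1 (by exact_mod_cast hr) q.cast_nonneg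
          g.cast_nonneg hg2 hM

def boxes {k : ℕ} (φ : Fin k → α → ℝ) : Set (Set α) :=
  {B | ∃ a b : Fin k → ℝ, B = {x | ∀ i, a i ≤ φ i x ∧ φ i x ≤ b i}}

theorem boxes_subset_slabs (φ : Fin 1 → α → ℝ) : boxes φ ⊆ slabs (φ 0) := by
  rintro _ ⟨a, b, rfl⟩
  exact ⟨a 0, b 0, by simp [Fin.forall_fin_one]⟩

theorem boxes_succ_subset {k : ℕ} (φ : Fin (k + 1) → α → ℝ) :
    boxes φ ⊆ boxes (Fin.tail φ) ⊼ slabs (φ 0) := by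
  rintro _ ⟨a, b, rfl⟩
  refine Set.mem_infs.2 ⟨_, ⟨Fin.tail a, Fin.tail b, rfl⟩, _, ⟨a 0, b 0, rfl⟩, ?_⟩
  ext x
  simp only [Set.inf_eq_inter, Set.mem_inter_iff, Set.mem_ofPred_eq, Fin.forall_fin_succ (n := k)]
  exact and_comm

theorem hasCrossingBound_boxes {k : ℕ} (hk : 1 ≤ k) :
    ∃ C : ℝ, 0 < C ∧ ∀ φ : Fin k → α → ℝ, HasCrossingBound (boxes φ) C (1 / k) := by
  induction k, hk using Nat.le_induction with
  | base => exact ⟨2, two_pos, fun φ => by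
      simpa using (hasCrossingBound_slabs (φ 0)).mono (boxes_subset_slabs φ)⟩
  | succ k hk ih =>
    obtain ⟨C, hC, hφ⟩ := ih
    have hk' : (1 : ℝ) ≤ k := by exact_mod_cast hk
    refine ⟨4 + 4 * C, by positivity, fun φ => ?_⟩
    have h := ((hφ (Fin.tail φ)).infs_slabs hC.le (by positivity)
      (div_le_one_of_le₀ hk' (by linarith)) (φ 0)).mono (boxes_succ_subset φ)
    have he : (1 : ℝ) / k / (1 + 1 / k) = 1 / ↑(k + 1) := by
      push_cast
      field_simp
    rwa [he] at h

theorem le_mul_ceil_div (n : ℕ) {r : ℕ} (hr : 0 < r) : n ≤ r * ⌈(n : ℝ) / r⌉₊ := by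
  have hr' : (0 : ℝ) < r := by exact_mod_cast hr
  exact_mod_cast (div_le_iff₀' hr').1 (Nat.le_ceil ((n : ℝ) / r))

theorem mul_ceil_div_mul_rpow_le {C : ℝ} (e : ℝ) (hC : 0 ≤ C) {n r : ℕ} (hr : 0 < r)
    (hrn : r ≤ n) : C * ⌈(n : ℝ) / r⌉₊ * (r : ℝ) ^ (1 - e) ≤ 2 * C * n / (r : ℝ) ^ e := by
  have hr' : (0 : ℝ) < r := by exact_mod_cast hr
  have hq : (⌈(n : ℝ) / r⌉₊ : ℝ) ≤ 2 * n / r := by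
    have h1 : (1 : ℝ) ≤ n / r := (one_le_div hr').2 (by exact_mod_cast hrn)
    have h2 := Nat.ceil_lt_add_one (zero_le_one.trans h1)
    linarith [show 2 * (n : ℝ) / r = n / r + n / r by ring]
  calc C * ⌈(n : ℝ) / r⌉₊ * (r : ℝ) ^ (1 - e) ≤ C * (2 * n / r) * (r : ℝ) ^ (1 - e) := by gcongr
    _ = 2 * C * n / (r : ℝ) ^ e := by
        rw [Real.rpow_sub hr', Real.rpow_one]
        field_simp

end PartitionLemma

open PartitionLemma

/-- Partition lemma, part (ii): for every `d ≥ 1` there is a constant `C > 0` such that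
any finite set `S` of `n` points in `ℝ^d` and any `1 ≤ r ≤ n` admit a partition of `S`
into at most `r` parts, each of size at most `⌈n/r⌉`, such that for every axis-aligned
box `B`, the number of points of `S ∩ B` lying in parts not fully contained in `B` is
at most `min {|S ∩ B|, C · n / r^(1/d)}`. -/
theorem partition_lemma_points (d : ℕ) (hd : 1 ≤ d) :
    ∃ C : ℝ, 0 < C ∧
      ∀ (S : Finset (Fin d → ℝ)) (n r : ℕ), n = S.card → 1 ≤ r → r ≤ n →
        ∃ Pi : Finset (Finset (Fin d → ℝ)),
          (∀ P ∈ Pi, P.Nonempty) ∧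
          (∀ P ∈ Pi, ∀ Q ∈ Pi, P ≠ Q → Disjoint P Q) ∧
          (Pi.sup id = S) ∧
          Pi.card ≤ r ∧
          (∀ P ∈ Pi, P.card ≤ ⌈(n : ℝ) / r⌉₊) ∧
          (∀ a b : Fin d → ℝ, (∀ i, a i ≤ b i) →
            ((S.filter (fun x =>
              (∀ i, a i ≤ x i ∧ x i ≤ b i) ∧
              ∃ P ∈ Pi, x ∈ P ∧ ¬ (∀ y ∈ P, ∀ i, a i ≤ y i ∧ y i ≤ b i))).card : ℝ) ≤
              min ((S.filter (fun x => ∀ i, a i ≤ x i ∧ x i ≤ b i)).card : ℝ)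
                (C * (n : ℝ) / (r : ℝ) ^ (1 / (d : ℝ)))) := by
  obtain ⟨C, hC, hboxes⟩ := hasCrossingBound_boxes (α := Fin d → ℝ) hd
  refine ⟨2 * C, by positivity, fun S n r hn hr hrn => ?_⟩
  subst hn
  obtain ⟨c, hc_image, hc_class, hc_cross⟩ :=
    hboxes (fun i x => x i) S r _ hr (le_mul_ceil_div _ hr)
  refine ⟨classes c S, fun P => nonempty_of_mem_classes,
    fun P hP Q hQ => disjoint_of_mem_classes hP hQ, sup_classes, card_classes_le.trans hc_image,
    fun P => card_le_of_mem_classes hc_class, fun a b _ => ?_⟩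
  have hcross : S.filter (fun x => (∀ i, a i ≤ x i ∧ x i ≤ b i) ∧
      ∃ P ∈ classes c S, x ∈ P ∧ ¬ (∀ y ∈ P, ∀ i, a i ≤ y i ∧ y i ≤ b i)) =
      crossing c S {x | ∀ i, a i ≤ x i ∧ x i ≤ b i} := by
    ext x
    rw [mem_filter, mem_crossing_iff_classes]
    rfl
  rw [hcross]
  refine le_min ?_ ((hc_cross _ ⟨a, b, rfl⟩).trans (mul_ceil_div_mul_rpow_le _ hC.le hr hrn))
  exact_mod_cast card_le_card fun x hx => by
    obtain ⟨hxS, hxB, -⟩ := mem_crossing.1 hx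
    exact mem_filter.2 ⟨hxS, hxB⟩
end
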